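/- Let A > 0 and let D be a demand with 0 < D < A / ln 2 (ln the natural logarithm). Then there exists a unique B > 0 such that B · log₂(1 + A/B) = D. (This justifies the bandwidth-estimation equation (17) of the paper, which defines the required bandwidth B̄_k(t) by B̄_k(t) · log₂(1 + P^max g^bound P_ls(l̄_k) / (B̄_k(t) σ²)) = D_k(t).) -/

import Mathlib

/-!
The rate `x ↦ x * log (1 + a / x)` has derivative `log (1 + a / x) - a / (x + a)`, positive by
`log y > 1 - 1 / y`, so it is strictly increasing on `(0, ∞)`. It tends to `0` as `x → 0⁺` and to
`a` as `x → ∞`, so by the intermediate value theorem it takes every value in `(0, a)` exactly once.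
As `log₂ = log / log 2`, the theorem is the case `a = A` at the value `D * log 2`.
-/

open Real Set Filter Topology

variable {a x : ℝ}

lemma one_sub_inv_lt_log {y : ℝ} (hy : 0 < y) (hy1 : y ≠ 1) : 1 - y⁻¹ < log y := by
  have := log_lt_sub_one_of_pos (inv_pos.2 hy) (inv_ne_one.2 hy1)
  rw [log_inv] at this
  linarith

lemma div_add_lt_log_one_add_div (hx : 0 < x) (ha : 0 < a) : a / (x + a) < log (1 + a / x) := by
  have hy : 1 + a / x ≠ 1 := by simp [hx.ne', ha.ne']
  calc a / (x + a) = 1 - (1 + a / x)⁻¹ := by field_simp; ring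
    _ < log (1 + a / x) := one_sub_inv_lt_log (by positivity) hy

lemma hasDerivAt_mul_log_one_add_div (hx : x ≠ 0) (hxa : x + a ≠ 0) :
    HasDerivAt (fun y => y * log (1 + a / y)) (log (1 + a / x) - a / (x + a)) x := by
  have hy : 1 + a / x ≠ 0 := by
    rw [one_add_div hx]
    exact div_ne_zero hxa hx
  have := (hasDerivAt_id' x).fun_mul
    ((((hasDerivAt_inv hx).const_mul a).const_add 1).log (by rwa [← div_eq_mul_inv]))
  simp only [← div_eq_mul_inv] at this
  refine this.congr_deriv ?_
  rw [one_add_div hx]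
  field_simp
  ring

lemma continuousOn_mul_log_one_add_div (ha : 0 ≤ a) :
    ContinuousOn (fun y => y * log (1 + a / y)) (Ioi 0) := fun x (hx : 0 < x) =>
  (hasDerivAt_mul_log_one_add_div hx.ne' (by positivity)).continuousAt.continuousWithinAt

lemma strictMonoOn_mul_log_one_add_div (ha : 0 < a) :
    StrictMonoOn (fun y => y * log (1 + a / y)) (Ioi 0) := by
  refine strictMonoOn_of_deriv_pos (convex_Ioi 0) (continuousOn_mul_log_one_add_div ha.le)
    fun x hx => ?_
  replace hx : 0 < x := by rwa [interior_Ioi] at hx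
  rw [(hasDerivAt_mul_log_one_add_div hx.ne' (by positivity)).deriv, sub_pos]
  exact div_add_lt_log_one_add_div hx ha

lemma tendsto_mul_log_one_add_div_nhdsGT_zero (ha : 0 < a) :
    Tendsto (fun y => y * log (1 + a / y)) (𝓝[>] 0) (𝓝 0) := by
  have hsplit : ∀ᶠ y in 𝓝[>] 0, y * log (y + a) - y * log y = y * log (1 + a / y) := by
    filter_upwards [self_mem_nhdsWithin] with y (hy : 0 < y)
    rw [one_add_div hy.ne', log_div (by positivity) hy.ne']
    ring
  -- `log` is singular at `0`, but `y * log y` is continuous there.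
  have hcont : ContinuousAt (fun y => y * log (y + a) - y * log y) 0 :=
    (continuousAt_id.mul ((continuousAt_log (by simpa using ha.ne')).comp
      (continuousAt_id.add continuousAt_const))).sub continuous_mul_log.continuousAt
  simpa using (hcont.tendsto.mono_left nhdsWithin_le_nhds).congr' hsplit

lemma surjOn_mul_log_one_add_div (ha : 0 < a) :
    SurjOn (fun y => y * log (1 + a / y)) (Ioi 0) (Ioo 0 a) :=
  isPreconnected_Ioi.intermediate_value_Ioo (l₁ := 𝓝[>] 0) (l₂ := atTop) inf_le_right
    (le_principal_iff.2 (Ioi_mem_atTop 0)) (continuousOn_mul_log_one_add_div ha.le)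
    (tendsto_mul_log_one_add_div_nhdsGT_zero ha) (tendsto_mul_log_one_add_div_atTop a)

/-- For `A > 0` and demand `0 < D < A / ln 2`, there is a unique `B > 0` with
`B * log₂(1 + A / B) = D`. -/
theorem bandwidth_exists_unique (A D : ℝ) (hA : 0 < A) (hD : 0 < D)
    (hDA : D < A / Real.log 2) :
    ∃! B : ℝ, 0 < B ∧ B * Real.logb 2 (1 + A / B) = D := by
  have hlog2 : 0 < log 2 := log_pos one_lt_two
  have hrate (B : ℝ) : B * logb 2 (1 + A / B) = D ↔ B * log (1 + A / B) = D * log 2 := by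
    rw [logb, mul_div_assoc', div_eq_iff hlog2.ne']
  simp only [hrate]
  obtain ⟨B, hB, hBeq⟩ := surjOn_mul_log_one_add_div hA
    (⟨by positivity, (lt_div_iff₀ hlog2).1 hDA⟩ : D * log 2 ∈ Ioo 0 A)
  exact ⟨B, ⟨hB, hBeq⟩, fun B' ⟨hB', hB'eq⟩ =>
    (strictMonoOn_mul_log_one_add_div hA).injOn hB' hB (hB'eq.trans hBeq.symm)⟩
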